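/- arXiv:1601.08102 — 5 statements merged into one kernel-verified Lean document; each statement's English description precedes it below -/
import Mathlib

section
/- For ν > 0 and all z in the unit disk, z · B_ν'(z) = 2ν · B_{ν-1}(z) − 2ν · B_ν(z). -/
/-!
Writing `B_ν(z) = ∑ cₙ(ν) zⁿ`, the functional equation `Γ(s + 1) = s Γ(s)` applied to `Γ(ν + 1)`
and `Γ(n/2 + ν + 1)` gives `2ν cₙ(ν - 1) = (n + 2ν) cₙ(ν)`, which is the claim coefficientwise,
since `z B_ν'(z) = ∑ n cₙ(ν) zⁿ`. Termwise differentiation is justified on the unit disk because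
the coefficients are bounded for `ν > -1`: `cₙ₊₂ = cₙ / ((n + 2)(n + 2ν + 2)) ≤ cₙ` once `n ≥ 1`.
-/

open Real Complex

/-- The Bessel-Struve kernel function. -/
noncomputable def besselStruve (ν : ℝ) (z : ℂ) : ℂ :=
  ∑' n : ℕ, ((Real.Gamma (ν + 1) * Real.Gamma (((n : ℝ) + 1) / 2) /
    (Real.sqrt Real.pi * (n.factorial : ℝ) * Real.Gamma ((n : ℝ) / 2 + ν + 1)) : ℝ) : ℂ) * z ^ n

section PowerSeries

variable {𝕜 : Type*} [RCLike 𝕜] {a : ℕ → 𝕜} {M : ℝ}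

theorem summable_mul_pow_of_norm_le (ha : ∀ n, ‖a n‖ ≤ M) {z : 𝕜} (hz : ‖z‖ < 1) :
    Summable fun n => a n * z ^ n := by
  refine .of_norm_bounded ((summable_geometric_of_lt_one (norm_nonneg z) hz).mul_left M)
    fun n => ?_
  rw [norm_mul, norm_pow]
  exact mul_le_mul_of_nonneg_right (ha n) (by positivity)

theorem summable_natCast_mul_pow_sub_one {r : ℝ} (hr₀ : 0 ≤ r) (hr : r < 1) :
    Summable fun n : ℕ => (n : ℝ) * r ^ (n - 1) := by
  rw [← summable_nat_add_iff 1]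
  simpa [add_mul] using (summable_pow_mul_geometric_of_norm_lt_one 1
    (by rwa [Real.norm_of_nonneg hr₀])).add (summable_geometric_of_lt_one hr₀ hr)

theorem hasDerivAt_tsum_mul_pow_of_norm_le (ha : ∀ n, ‖a n‖ ≤ M) {z : 𝕜} (hz : ‖z‖ < 1) :
    HasDerivAt (fun w => ∑' n, a n * w ^ n) (∑' n, a n * (n * z ^ (n - 1))) z := by
  obtain ⟨r, hzr, hr⟩ := exists_between hz
  have hr₀ : 0 < r := (norm_nonneg z).trans_lt hzr
  refine hasDerivAt_tsum_of_isPreconnected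
    ((summable_natCast_mul_pow_sub_one hr₀.le hr).mul_left M) Metric.isOpen_ball
    (convex_ball 0 r).isPreconnected
    (fun n w _ => (hasDerivAt_pow n w).const_mul (a n)) (fun n w hw => ?_)
    (Metric.mem_ball_self hr₀) (summable_mul_pow_of_norm_le ha (by simp))
    (mem_ball_zero_iff.2 hzr)
  · rw [norm_mul, norm_mul, norm_pow, RCLike.norm_natCast]
    gcongr
    · exact (norm_nonneg _).trans (ha 0)
    · exact ha n
    · exact (mem_ball_zero_iff.1 hw).le

theorem mul_deriv_tsum_mul_pow_of_norm_le (ha : ∀ n, ‖a n‖ ≤ M) {z : 𝕜} (hz : ‖z‖ < 1) :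
    z * deriv (fun w => ∑' n, a n * w ^ n) z = ∑' n, n * a n * z ^ n := by
  rw [(hasDerivAt_tsum_mul_pow_of_norm_le ha hz).deriv, ← tsum_mul_left]
  congr 1
  ext (_ | n)
  · simp
  · simp only [Nat.cast_succ, add_tsub_cancel_right, pow_succ]
    ring

end PowerSeries

noncomputable def besselStruveCoeff (ν : ℝ) (n : ℕ) : ℝ :=
  Real.Gamma (ν + 1) * Real.Gamma (((n : ℝ) + 1) / 2) /
    (Real.sqrt Real.pi * (n.factorial : ℝ) * Real.Gamma ((n : ℝ) / 2 + ν + 1))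

theorem besselStruve_eq_tsum (ν : ℝ) :
    besselStruve ν = fun z => ∑' n, (besselStruveCoeff ν n : ℂ) * z ^ n :=
  rfl

namespace besselStruveCoeff

variable {ν : ℝ}

theorem pos (hν : -1 < ν) (n : ℕ) : 0 < besselStruveCoeff ν n := by
  unfold besselStruveCoeff
  have := Real.Gamma_pos_of_pos (s := ν + 1) (by linarith)
  have := Real.Gamma_pos_of_pos (s := ((n : ℝ) + 1) / 2) (by positivity)
  have := Real.Gamma_pos_of_pos (s := (n : ℝ) / 2 + ν + 1) (by linarith [n.cast_nonneg (α := ℝ)])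
  positivity

theorem add_two (hν : -1 < ν) (n : ℕ) :
    besselStruveCoeff ν (n + 2) = besselStruveCoeff ν n / ((n + 2) * (n + 2 * ν + 2)) := by
  have hx : 0 < (n : ℝ) / 2 + ν + 1 := by linarith [n.cast_nonneg (α := ℝ)]
  have hΓ₁ : Real.Gamma ((((n + 2 : ℕ) : ℝ) + 1) / 2) =
      ((n + 1) / 2) * Real.Gamma (((n : ℝ) + 1) / 2) := by
    rw [← Real.Gamma_add_one (by positivity)]; push_cast; ring_nf
  have hΓ₂ : Real.Gamma (((n + 2 : ℕ) : ℝ) / 2 + ν + 1) =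
      ((n : ℝ) / 2 + ν + 1) * Real.Gamma ((n : ℝ) / 2 + ν + 1) := by
    rw [← Real.Gamma_add_one hx.ne']; push_cast; ring_nf
  have := (Real.Gamma_pos_of_pos hx).ne'
  unfold besselStruveCoeff
  rw [hΓ₁, hΓ₂, Nat.factorial_succ, Nat.factorial_succ]
  field_simp
  push_cast
  ring

theorem add_three_le (hν : -1 < ν) (n : ℕ) :
    besselStruveCoeff ν (n + 3) ≤ besselStruveCoeff ν (n + 1) := by
  rw [add_two hν]
  refine div_le_self (pos hν _).le ?_
  push_cast
  nlinarith [n.cast_nonneg (α := ℝ)]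

theorem le_max (hν : -1 < ν) (n : ℕ) : besselStruveCoeff ν n ≤
    max (besselStruveCoeff ν 0) (max (besselStruveCoeff ν 1) (besselStruveCoeff ν 2)) := by
  induction n using Nat.strong_induction_on with
  | _ n ih =>
    match n with
    | 0 => exact le_max_left ..
    | 1 => exact (le_max_left ..).trans (le_max_right ..)
    | 2 => exact (le_max_right ..).trans (le_max_right ..)
    | n + 3 => exact (add_three_le hν n).trans (ih (n + 1) (by omega))

theorem two_mul_sub_one (hν : 0 < ν) (n : ℕ) :
    2 * ν * besselStruveCoeff (ν - 1) n = (n + 2 * ν) * besselStruveCoeff ν n := by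
  have hx : 0 < (n : ℝ) / 2 + ν := by linarith [n.cast_nonneg (α := ℝ)]
  have := (Real.Gamma_pos_of_pos hν).ne'
  have := (Real.Gamma_pos_of_pos hx).ne'
  unfold besselStruveCoeff
  rw [sub_add_cancel, show (n : ℝ) / 2 + (ν - 1) + 1 = (n : ℝ) / 2 + ν by ring,
    Real.Gamma_add_one hν.ne', Real.Gamma_add_one hx.ne']
  field_simp

theorem exists_norm_le (hν : -1 < ν) : ∃ M, ∀ n, ‖(besselStruveCoeff ν n : ℂ)‖ ≤ M :=
  ⟨_, fun n => by rw [Complex.norm_real, Real.norm_of_nonneg (pos hν n).le]; exact le_max hν n⟩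

end besselStruveCoeff

theorem besselStruve_recurrence (ν : ℝ) (hν : 0 < ν) (z : ℂ) (hz : ‖z‖ < 1) :
    z * deriv (besselStruve ν) z =
      2 * (ν : ℂ) * besselStruve (ν - 1) z - 2 * (ν : ℂ) * besselStruve ν z := by
  obtain ⟨M, hM⟩ := besselStruveCoeff.exists_norm_le (by linarith : -1 < ν)
  obtain ⟨M', hM'⟩ := besselStruveCoeff.exists_norm_le (by linarith : -1 < ν - 1)
  simp only [besselStruve_eq_tsum]
  rw [mul_deriv_tsum_mul_pow_of_norm_le hM hz, ← tsum_mul_left, ← tsum_mul_left,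
    ← ((summable_mul_pow_of_norm_le hM' hz).mul_left _).tsum_sub
      ((summable_mul_pow_of_norm_le hM hz).mul_left _)]
  congr 1 with n
  have h := congrArg ((↑) : ℝ → ℂ) (besselStruveCoeff.two_mul_sub_one hν n)
  push_cast at h
  linear_combination -(z ^ n) * h
end

section
/- Let ν ≥ 1/2 and let a_n be the Taylor coefficients of z·B_ν(z) (a_1 = 1, a_n = Γ(ν+1) Γ(n/2) / (√π (n−1)! Γ((n+1)/2 + ν)) for n ≥ 2). Then for all n ≥ 2, n·a_n − 2(n+1)·a_{n+1} + (n+2)·a_{n+2} > 0. -/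
open Real

/-- Log-convexity of Gamma at midpoint: Γ(z+1/2)² ≤ z·Γ(z)². -/
lemma gamma_half_sq_le (z : ℝ) (hz : 0 < z) :
    Real.Gamma (z + 1/2) ^ 2 ≤ z * Real.Gamma z ^ 2 := by
  have h1 : (0:ℝ) < z + 1 := by linarith
  have hmid : (1/2 : ℝ) • z + (1/2 : ℝ) • (z + 1) = z + 1/2 := by
    simp only [smul_eq_mul]; ring
  have hcv := Real.convexOn_log_Gamma.2 (Set.mem_Ioi.mpr hz) (Set.mem_Ioi.mpr h1)
    (by norm_num : (0:ℝ) ≤ 1/2) (by norm_num : (0:ℝ) ≤ 1/2) (by norm_num)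
  rw [hmid] at hcv
  simp only [Function.comp_apply, smul_eq_mul] at hcv
  have hG : 0 < Real.Gamma z := Real.Gamma_pos_of_pos hz
  have hG1 : 0 < Real.Gamma (z + 1) := Real.Gamma_pos_of_pos h1
  have hGm : 0 < Real.Gamma (z + 1/2) := Real.Gamma_pos_of_pos (by linarith)
  have h2 : 2 * Real.log (Real.Gamma (z + 1/2)) ≤
      Real.log (Real.Gamma z) + Real.log (Real.Gamma (z + 1)) := by linarith
  have h3 : Real.Gamma (z + 1/2) ^ 2 ≤ Real.Gamma z * Real.Gamma (z + 1) := by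
    have := Real.exp_le_exp.mpr h2
    rwa [Real.exp_add, Real.exp_log hG, Real.exp_log hG1,
      show (2:ℝ) * Real.log (Real.Gamma (z + 1/2)) =
        (2:ℕ) * Real.log (Real.Gamma (z + 1/2)) by norm_num,
      Real.exp_nat_mul, Real.exp_log hGm] at this
  rw [Real.Gamma_add_one hz.ne'] at h3
  nlinarith [h3]

/-- Wendel-type lower bound: z·Γ(z) ≤ √(z+1/2)·Γ(z+1/2). -/
lemma gamma_half_low (z : ℝ) (hz : 0 < z) :
    z * Real.Gamma z ≤ Real.sqrt (z + 1/2) * Real.Gamma (z + 1/2) := by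
  have h := gamma_half_sq_le (z + 1/2) (by linarith)
  rw [show z + 1/2 + 1/2 = z + 1 by ring, Real.Gamma_add_one hz.ne'] at h
  have hGm : 0 < Real.Gamma (z + 1/2) := Real.Gamma_pos_of_pos (by linarith)
  have hG : 0 < Real.Gamma z := Real.Gamma_pos_of_pos hz
  have hs : Real.sqrt ((z * Real.Gamma z)^2) ≤ Real.sqrt ((z + 1/2) * Real.Gamma (z + 1/2)^2) :=
    Real.sqrt_le_sqrt (by nlinarith [h])
  rwa [Real.sqrt_sq (by positivity), Real.sqrt_mul (by linarith : (0:ℝ) ≤ z + 1/2),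
    Real.sqrt_sq hGm.le] at hs

set_option maxHeartbeats 1600000 in
set_option maxRecDepth 8000 in
lemma poly_sq_aux (u v : ℝ) (hu : 0 ≤ u) (hv : 0 ≤ v) :
    (2*(1+u)+1)^4 * (((1+u)+1)*((2+u+v)+5/2)) * (((2+u+v)+1/2)*((2+u+v)+3/2))^2
      < (((1+u)+1/2)*(((2+u+v)+1)*((2+u+v)+2))
          *(2*(1+u)*(2+u+v)*(2*(1+u)+1)+((1+u)+1)))^2 := by
  linarith [pow_nonneg hv 1,
    pow_nonneg hv 2,
    pow_nonneg hv 3,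
    pow_nonneg hv 4,
    pow_nonneg hv 5,
    pow_nonneg hv 6,
    pow_nonneg hu 1,
    mul_nonneg (pow_nonneg hu 1) (pow_nonneg hv 1),
    mul_nonneg (pow_nonneg hu 1) (pow_nonneg hv 2),
    mul_nonneg (pow_nonneg hu 1) (pow_nonneg hv 3),
    mul_nonneg (pow_nonneg hu 1) (pow_nonneg hv 4),
    mul_nonneg (pow_nonneg hu 1) (pow_nonneg hv 5),
    mul_nonneg (pow_nonneg hu 1) (pow_nonneg hv 6),
    pow_nonneg hu 2,
    mul_nonneg (pow_nonneg hu 2) (pow_nonneg hv 1),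
    mul_nonneg (pow_nonneg hu 2) (pow_nonneg hv 2),
    mul_nonneg (pow_nonneg hu 2) (pow_nonneg hv 3),
    mul_nonneg (pow_nonneg hu 2) (pow_nonneg hv 4),
    mul_nonneg (pow_nonneg hu 2) (pow_nonneg hv 5),
    mul_nonneg (pow_nonneg hu 2) (pow_nonneg hv 6),
    pow_nonneg hu 3,
    mul_nonneg (pow_nonneg hu 3) (pow_nonneg hv 1),
    mul_nonneg (pow_nonneg hu 3) (pow_nonneg hv 2),
    mul_nonneg (pow_nonneg hu 3) (pow_nonneg hv 3),
    mul_nonneg (pow_nonneg hu 3) (pow_nonneg hv 4),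
    mul_nonneg (pow_nonneg hu 3) (pow_nonneg hv 5),
    mul_nonneg (pow_nonneg hu 3) (pow_nonneg hv 6),
    pow_nonneg hu 4,
    mul_nonneg (pow_nonneg hu 4) (pow_nonneg hv 1),
    mul_nonneg (pow_nonneg hu 4) (pow_nonneg hv 2),
    mul_nonneg (pow_nonneg hu 4) (pow_nonneg hv 3),
    mul_nonneg (pow_nonneg hu 4) (pow_nonneg hv 4),
    mul_nonneg (pow_nonneg hu 4) (pow_nonneg hv 5),
    mul_nonneg (pow_nonneg hu 4) (pow_nonneg hv 6),
    pow_nonneg hu 5,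
    mul_nonneg (pow_nonneg hu 5) (pow_nonneg hv 1),
    mul_nonneg (pow_nonneg hu 5) (pow_nonneg hv 2),
    mul_nonneg (pow_nonneg hu 5) (pow_nonneg hv 3),
    mul_nonneg (pow_nonneg hu 5) (pow_nonneg hv 4),
    mul_nonneg (pow_nonneg hu 5) (pow_nonneg hv 5),
    mul_nonneg (pow_nonneg hu 5) (pow_nonneg hv 6),
    pow_nonneg hu 6,
    mul_nonneg (pow_nonneg hu 6) (pow_nonneg hv 1),
    mul_nonneg (pow_nonneg hu 6) (pow_nonneg hv 2),
    mul_nonneg (pow_nonneg hu 6) (pow_nonneg hv 3),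
    mul_nonneg (pow_nonneg hu 6) (pow_nonneg hv 4),
    mul_nonneg (pow_nonneg hu 6) (pow_nonneg hv 5),
    mul_nonneg (pow_nonneg hu 6) (pow_nonneg hv 6),
    pow_nonneg hu 7,
    mul_nonneg (pow_nonneg hu 7) (pow_nonneg hv 1),
    mul_nonneg (pow_nonneg hu 7) (pow_nonneg hv 2),
    mul_nonneg (pow_nonneg hu 7) (pow_nonneg hv 3),
    mul_nonneg (pow_nonneg hu 7) (pow_nonneg hv 4),
    mul_nonneg (pow_nonneg hu 7) (pow_nonneg hv 5),
    pow_nonneg hu 8,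
    mul_nonneg (pow_nonneg hu 8) (pow_nonneg hv 1),
    mul_nonneg (pow_nonneg hu 8) (pow_nonneg hv 2),
    mul_nonneg (pow_nonneg hu 8) (pow_nonneg hv 3),
    mul_nonneg (pow_nonneg hu 8) (pow_nonneg hv 4),
    pow_nonneg hu 9,
    mul_nonneg (pow_nonneg hu 9) (pow_nonneg hv 1),
    mul_nonneg (pow_nonneg hu 9) (pow_nonneg hv 2),
    mul_nonneg (pow_nonneg hu 9) (pow_nonneg hv 3),
    pow_nonneg hu 10,
    mul_nonneg (pow_nonneg hu 10) (pow_nonneg hv 1),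
    mul_nonneg (pow_nonneg hu 10) (pow_nonneg hv 2),
    pow_nonneg hu 11,
    mul_nonneg (pow_nonneg hu 11) (pow_nonneg hv 1),
    pow_nonneg hu 12]

lemma poly_key (x y : ℝ) (hx : 1 ≤ x) (hy : x + 1 ≤ y) :
    (2*x+1)^2 * (Real.sqrt (x+1) * Real.sqrt (y+5/2)) * ((y+1/2)*(y+3/2))
      < (x+1/2) * ((y+1)*(y+2)) * (2*x*y*(2*x+1)+(x+1)) := by
  have hx1 : (0:ℝ) ≤ x + 1 := by linarith
  have hy5 : (0:ℝ) ≤ y + 5/2 := by linarith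
  have hR : (0:ℝ) < (x+1/2) * ((y+1)*(y+2)) * (2*x*y*(2*x+1)+(x+1)) := by
    have h1 : (0:ℝ) < x + 1/2 := by linarith
    have h2 : (0:ℝ) < (y+1)*(y+2) := by nlinarith
    have h3 : (0:ℝ) < 2*x*y*(2*x+1)+(x+1) := by
      have hxp : (0:ℝ) < x := by linarith
      have hyp : (0:ℝ) < y := by linarith
      nlinarith [mul_pos hxp hyp, mul_pos (mul_pos hxp hxp) hyp]
    exact mul_pos (mul_pos h1 h2) h3
  refine lt_of_pow_lt_pow_left₀ 2 hR.le ?_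
  have hsq := poly_sq_aux (x - 1) (y - x - 1) (by linarith) (by linarith)
  have e1 : (2*(1+(x-1))+1) = 2*x+1 := by ring
  have hps : Real.sqrt (x+1) ^ 2 = x + 1 := Real.sq_sqrt hx1
  have hqs : Real.sqrt (y+5/2) ^ 2 = y + 5/2 := Real.sq_sqrt hy5
  rw [show ((2*x+1)^2 * (Real.sqrt (x+1) * Real.sqrt (y+5/2)) * ((y+1/2)*(y+3/2)))^2
      = (2*x+1)^4 * (Real.sqrt (x+1)^2 * Real.sqrt (y+5/2)^2) * ((y+1/2)*(y+3/2))^2 from by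
        ring, hps, hqs]
  nlinarith [hsq]

/-- Combined bracket inequality. -/
lemma bracket_pos (x y A B Cg Dg : ℝ) (hx : 1 ≤ x) (hy : x + 1 ≤ y)
    (hA : 0 < A) (hB : 0 < B) (hC : 0 < Cg) (hD : 0 < Dg)
    (hU : (x+1/2) * Cg ≤ Real.sqrt (x+1) * (x*A))
    (hL : y*(y+1)*(y+2)*B ≤ (y+1/2)*(y+3/2) * (Real.sqrt (y+5/2) * Dg)) :
    y * (2*x+1)^2 * (Cg*B) < x * (2*x*y*(2*x+1)+(x+1)) * (A*Dg) := by
  have hxp : (0:ℝ) < x := by linarith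
  have hyp : (0:ℝ) < y := by linarith
  have h12 : ((x+1/2)*Cg) * (y*(y+1)*(y+2)*B)
      ≤ (Real.sqrt (x+1) * (x*A)) * ((y+1/2)*(y+3/2) * (Real.sqrt (y+5/2) * Dg)) :=
    mul_le_mul hU hL (by positivity) (by positivity)
  have hpk := poly_key x y hx hy
  have hfac : (0:ℝ) < (x+1/2)*((y+1)*(y+2)) := by positivity
  rw [← mul_lt_mul_iff_right₀ hfac]
  have hpk2 : ((2*x+1)^2 * (Real.sqrt (x+1) * Real.sqrt (y+5/2)) * ((y+1/2)*(y+3/2)))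
      * (x*(A*Dg)) < ((x+1/2) * ((y+1)*(y+2)) * (2*x*y*(2*x+1)+(x+1))) * (x*(A*Dg)) :=
    mul_lt_mul_of_pos_right hpk (by positivity)
  have h12' : ((x+1/2)*Cg) * (y*(y+1)*(y+2)*B) * (2*x+1)^2
      ≤ (Real.sqrt (x+1) * (x*A)) * ((y+1/2)*(y+3/2) * (Real.sqrt (y+5/2) * Dg)) * (2*x+1)^2 :=
    mul_le_mul_of_nonneg_right h12 (by positivity)
  nlinarith [h12', hpk2]

theorem coeff_second_difference_pos (ν : ℝ) (hν : 1/2 ≤ ν) (a : ℕ → ℝ) (ha1 : a 1 = 1)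
    (ha : ∀ n : ℕ, 2 ≤ n → a n = Real.Gamma (ν + 1) * Real.Gamma ((n : ℝ) / 2) /
      (Real.sqrt Real.pi * ((n - 1).factorial : ℝ) * Real.Gamma (((n : ℝ) + 1) / 2 + ν))) :
    ∀ n : ℕ, 2 ≤ n →
      (n : ℝ) * a n - 2 * ((n : ℝ) + 1) * a (n + 1) + ((n : ℝ) + 2) * a (n + 2) > 0 := by
  intro n hn
  set N : ℝ := (n : ℝ) with hN
  have hN2 : (2:ℝ) ≤ N := by rw [hN]; exact_mod_cast hn
  set x : ℝ := N / 2 with hxdef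
  set y : ℝ := (N + 1) / 2 + ν with hydef
  have hx1 : (1:ℝ) ≤ x := by rw [hxdef]; linarith
  have hxy : x + 1 ≤ y := by rw [hxdef, hydef]; linarith
  have hxp : (0:ℝ) < x := by linarith
  have hyp : (0:ℝ) < y := by linarith
  -- rewrite the three coefficients
  have e1 : a n = Real.Gamma (ν + 1) * Real.Gamma x /
      (Real.sqrt Real.pi * ((n - 1).factorial : ℝ) * Real.Gamma y) := ha n hn
  have e2 : a (n+1) = Real.Gamma (ν + 1) * Real.Gamma (x + 1/2) /
      (Real.sqrt Real.pi * (n.factorial : ℝ) * Real.Gamma (y + 1/2)) := by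
    have := ha (n+1) (by omega)
    rw [this]
    have c1 : ((n+1 : ℕ) : ℝ) = N + 1 := by push_cast [hN]; ring
    rw [show n + 1 - 1 = n from rfl, c1,
      show (N+1)/2 = x + 1/2 by rw [hxdef]; ring,
      show (N+1+1)/2 + ν = y + 1/2 by rw [hydef]; ring]
  have e3 : a (n+2) = Real.Gamma (ν + 1) * (x * Real.Gamma x) /
      (Real.sqrt Real.pi * ((n+1).factorial : ℝ) * (y * Real.Gamma y)) := by
    have := ha (n+2) (by omega)
    rw [this]
    have c1 : ((n+2 : ℕ) : ℝ) = N + 2 := by push_cast [hN]; ring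
    rw [show n + 2 - 1 = n + 1 from rfl, c1,
      show (N+2)/2 = x + 1 by rw [hxdef]; ring,
      show (N+2+1)/2 + ν = y + 1 by rw [hydef]; ring,
      Real.Gamma_add_one hxp.ne', Real.Gamma_add_one hyp.ne']
  -- positivity facts
  have hA : 0 < Real.Gamma x := Real.Gamma_pos_of_pos hxp
  have hB : 0 < Real.Gamma y := Real.Gamma_pos_of_pos hyp
  have hC : 0 < Real.Gamma (x + 1/2) := Real.Gamma_pos_of_pos (by linarith)
  have hD : 0 < Real.Gamma (y + 1/2) := Real.Gamma_pos_of_pos (by linarith)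
  have hGν : 0 < Real.Gamma (ν + 1) := Real.Gamma_pos_of_pos (by linarith)
  have hπ : 0 < Real.sqrt Real.pi := Real.sqrt_pos.mpr Real.pi_pos
  -- ratio bounds
  have hU : (x+1/2) * Real.Gamma (x + 1/2) ≤ Real.sqrt (x+1) * (x * Real.Gamma x) := by
    have h := gamma_half_low (x + 1/2) (by linarith)
    rw [show x + 1/2 + 1/2 = x + 1 by ring, Real.Gamma_add_one hxp.ne'] at h
    exact h
  have hL : y*(y+1)*(y+2) * Real.Gamma y
      ≤ (y+1/2)*(y+3/2) * (Real.sqrt (y+5/2) * Real.Gamma (y + 1/2)) := by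
    have h := gamma_half_low (y + 2) (by linarith)
    rw [show y + 2 + 1/2 = y + 5/2 by ring] at h
    have hg1 : Real.Gamma (y + 5/2) = (y+3/2) * ((y+1/2) * Real.Gamma (y + 1/2)) := by
      rw [show (y + 5/2 : ℝ) = (y + 3/2) + 1 by ring,
        Real.Gamma_add_one (by linarith : (y + 3/2 : ℝ) ≠ 0)]
      rw [show (y + 3/2 : ℝ) = (y + 1/2) + 1 by ring,
        Real.Gamma_add_one (by linarith : (y + 1/2 : ℝ) ≠ 0)]
    have hg2 : Real.Gamma (y + 2) = (y+1) * (y * Real.Gamma y) := by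
      rw [show (y + 2 : ℝ) = (y + 1) + 1 by ring,
        Real.Gamma_add_one (by linarith : (y + 1 : ℝ) ≠ 0),
        Real.Gamma_add_one hyp.ne']
    rw [hg1, hg2] at h
    nlinarith [h]
  have hbr := bracket_pos x y (Real.Gamma x) (Real.Gamma y)
    (Real.Gamma (x + 1/2)) (Real.Gamma (y + 1/2)) hx1 hxy hA hB hC hD hU hL
  -- assemble
  have hf1 : (0:ℝ) < ((n-1).factorial : ℝ) := by positivity
  have hf2 : (0:ℝ) < (n.factorial : ℝ) := by positivity
  have hf3 : (0:ℝ) < ((n+1).factorial : ℝ) := by positivity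
  have hfact2 : (n.factorial : ℝ) = N * ((n-1).factorial : ℝ) := by
    rw [hN]
    conv_lhs => rw [show n = (n - 1) + 1 by omega]
    rw [Nat.factorial_succ]
    push_cast [show n - 1 + 1 = n by omega]
    ring
  have hfact3 : ((n+1).factorial : ℝ) = (N+1) * N * ((n-1).factorial : ℝ) := by
    rw [Nat.factorial_succ, hN]
    push_cast
    rw [show ((n:ℝ)) = N from (by rw [hN])] 
    rw [hfact2]
    push_cast [hN]
    ring
  have key : N * a n - 2 * (N + 1) * a (n + 1) + (N + 2) * a (n + 2)
      = (2 * Real.Gamma (ν+1) / (Real.sqrt Real.pi * ((n+1).factorial : ℝ) * y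
          * Real.Gamma y * Real.Gamma (y + 1/2)))
        * (x * (2*x*y*(2*x+1)+(x+1)) * (Real.Gamma x * Real.Gamma (y+1/2))
            - y * (2*x+1)^2 * (Real.Gamma (x+1/2) * Real.Gamma y)) := by
    rw [e1, e2, e3, hfact2, hfact3]
    have hx' : N = 2 * x := by rw [hxdef]; ring
    rw [hx']
    field_simp
    ring
  rw [gt_iff_lt, key]
  have hfac : 0 < 2 * Real.Gamma (ν+1) / (Real.sqrt Real.pi * ((n+1).factorial : ℝ) * y
      * Real.Gamma y * Real.Gamma (y + 1/2)) := by positivity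
  exact mul_pos hfac (by linarith)
end

section
/- There exists a unique ν₀ > 0 such that √π · Γ(ν₀ + 3/2) = 8 · Γ(ν₀ + 1), and for all ν ≥ ν₀ one has √π · Γ(ν + 3/2) ≥ 8 · Γ(ν + 1). Moreover 19 < ν₀ < 20. -/
/-!
The Beta integral `Γ(s) Γ(t) / Γ(s + t) = ∫₀¹ x^(s-1) (1-x)^(t-1) dx` is strictly decreasing in `s`,
so `ν ↦ Γ(ν + 1) / Γ(ν + 3/2)` is strictly decreasing on `(-1, ∞)`, and the equation
`√π Γ(ν + 3/2) = 8 Γ(ν + 1)` says that this ratio equals `√π / 8`. At the integers the ratio is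
`2^(n+1) n! / ((2n+1)‼ √π)`, and the bounds `3.14 < π < 3.15` place the crossing in `(19, 20)`.
-/

open Real Set MeasureTheory
open scoped Nat

lemma ofReal_betaIntegrand {s t x : ℝ} (hx : x ∈ Icc (0 : ℝ) 1) :
    (x : ℂ) ^ ((s : ℂ) - 1) * (1 - (x : ℂ)) ^ ((t : ℂ) - 1) =
      ((x ^ (s - 1) * (1 - x) ^ (t - 1) : ℝ) : ℂ) := by
  rw [Complex.ofReal_mul, Complex.ofReal_cpow hx.1, Complex.ofReal_cpow (sub_nonneg.2 hx.2)]
  push_cast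
  rfl

lemma intervalIntegrable_betaIntegrand {s t : ℝ} (hs : 0 < s) (ht : 0 < t) :
    IntervalIntegrable (fun x : ℝ => x ^ (s - 1) * (1 - x) ^ (t - 1)) volume 0 1 := by
  have h := Complex.betaIntegral_convergent (u := s) (v := t) (by simpa) (by simpa)
  refine IntervalIntegrable.congr (fun x hx => ?_) ⟨h.1.re, h.2.re⟩
  rw [uIoc_of_le zero_le_one] at hx
  simp only [RCLike.re_to_complex, ofReal_betaIntegrand (Ioc_subset_Icc_self hx), Complex.ofReal_re]

lemma Gamma_mul_Gamma_div_Gamma_add {s t : ℝ} (hs : 0 < s) (ht : 0 < t) :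
    Gamma s * Gamma t / Gamma (s + t) = ∫ x in (0 : ℝ)..1, x ^ (s - 1) * (1 - x) ^ (t - 1) := by
  have h := Complex.betaIntegral_eq_Gamma_mul_div s t (by simpa) (by simpa)
  rw [Complex.betaIntegral, intervalIntegral.integral_congr (fun x hx => ofReal_betaIntegrand
    (uIcc_of_le (zero_le_one' ℝ) ▸ hx)), intervalIntegral.integral_ofReal, ← Complex.ofReal_add,
    Complex.Gamma_ofReal, Complex.Gamma_ofReal, Complex.Gamma_ofReal] at h
  exact_mod_cast h.symm

theorem strictAntiOn_Gamma_div_Gamma_add {t : ℝ} (ht : 0 < t) :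
    StrictAntiOn (fun s => Gamma s / Gamma (s + t)) (Ioi 0) := by
  intro a ha b hb hab
  have hia := intervalIntegrable_betaIntegrand ha ht
  have hib := intervalIntegrable_betaIntegrand hb ht
  show Gamma b / Gamma (b + t) < Gamma a / Gamma (a + t)
  rw [← mul_lt_mul_iff_of_pos_right (Gamma_pos_of_pos ht), div_mul_eq_mul_div, div_mul_eq_mul_div,
    Gamma_mul_Gamma_div_Gamma_add ha ht, Gamma_mul_Gamma_div_Gamma_add hb ht, ← sub_pos,
    ← intervalIntegral.integral_sub hia hib]
  refine intervalIntegral.intervalIntegral_pos_of_pos_on (hia.sub hib) (fun x hx => ?_) one_pos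
  have hpow : x ^ (b - 1) < x ^ (a - 1) := rpow_lt_rpow_of_exponent_gt hx.1 hx.2 (by linarith)
  have hweight : 0 < (1 - x) ^ (t - 1) := rpow_pos_of_pos (by linarith [hx.2]) _
  simpa only [← sub_mul] using mul_pos (sub_pos.2 hpow) hweight

noncomputable def gammaRatio (ν : ℝ) : ℝ :=
  Gamma (ν + 1) / Gamma (ν + 3 / 2)

lemma strictAntiOn_gammaRatio : StrictAntiOn gammaRatio (Ioi (-1)) := by
  intro a ha b hb hab
  have h := strictAntiOn_Gamma_div_Gamma_add one_half_pos
    (by linarith [mem_Ioi.1 ha] : (0 : ℝ) < a + 1) (by linarith [mem_Ioi.1 hb] : (0 : ℝ) < b + 1)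
    (by linarith : a + 1 < b + 1)
  norm_num [add_assoc] at h
  simpa only [gammaRatio] using h

lemma continuousOn_gammaRatio : ContinuousOn gammaRatio (Ioi (-1)) := by
  have hΓ := differentiableOn_Gamma_Ioi.continuousOn
  refine ContinuousOn.div (hΓ.comp (by fun_prop) fun ν hν => ?_)
    (hΓ.comp (by fun_prop) fun ν hν => ?_) fun ν hν => (Gamma_pos_of_pos ?_).ne'
  all_goals simp only [mem_Ioi] at *; linarith

lemma gammaRatio_natCast (n : ℕ) :
    gammaRatio n = 2 ^ (n + 1) * n ! / ((2 * n + 1)‼ * √π) := by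
  rw [gammaRatio, show (n : ℝ) + 3 / 2 = n + 1 + 1 / 2 by ring, Gamma_nat_add_one_add_half,
    Gamma_nat_eq_factorial]
  field_simp

lemma eight_mul_Gamma_le_iff_gammaRatio_le {ν : ℝ} (hν : -1 < ν) :
    8 * Gamma (ν + 1) ≤ √π * Gamma (ν + 3 / 2) ↔ gammaRatio ν ≤ √π / 8 := by
  rw [gammaRatio, div_le_div_iff₀ (Gamma_pos_of_pos (by linarith)) (by norm_num), mul_comm 8]

lemma sqrt_pi_mul_Gamma_eq_iff_gammaRatio_eq {ν : ℝ} (hν : -1 < ν) :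
    √π * Gamma (ν + 3 / 2) = 8 * Gamma (ν + 1) ↔ gammaRatio ν = √π / 8 := by
  rw [gammaRatio, div_eq_div_iff (Gamma_pos_of_pos (by linarith)).ne' (by norm_num), mul_comm 8,
    eq_comm]

lemma sqrt_pi_div_eight_lt_gammaRatio_nineteen : √π / 8 < gammaRatio 19 := by
  have h := gammaRatio_natCast 19
  push_cast at h
  rw [h, lt_div_iff₀ (by positivity)]
  have hπ := mul_self_sqrt pi_pos.le
  have := pi_lt_d2
  norm_num [Nat.factorial, Nat.doubleFactorial]
  nlinarith

lemma gammaRatio_twenty_lt_sqrt_pi_div_eight : gammaRatio 20 < √π / 8 := by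
  have h := gammaRatio_natCast 20
  push_cast at h
  rw [h, div_lt_iff₀ (by positivity)]
  have hπ := mul_self_sqrt pi_pos.le
  have := pi_gt_d2
  norm_num [Nat.factorial, Nat.doubleFactorial]
  nlinarith

theorem exists_unique_nu_zero :
    ∃ ν₀ : ℝ, 0 < ν₀ ∧
      Real.sqrt Real.pi * Real.Gamma (ν₀ + 3/2) = 8 * Real.Gamma (ν₀ + 1) ∧
      (∀ ν : ℝ, 0 < ν →
        Real.sqrt Real.pi * Real.Gamma (ν + 3/2) = 8 * Real.Gamma (ν + 1) → ν = ν₀) ∧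
      (∀ ν : ℝ, ν₀ ≤ ν →
        Real.sqrt Real.pi * Real.Gamma (ν + 3/2) ≥ 8 * Real.Gamma (ν + 1)) ∧
      19 < ν₀ ∧ ν₀ < 20 := by
  obtain ⟨ν₀, ⟨h19, h20⟩, hν₀⟩ := intermediate_value_Ioo' (by norm_num : (19 : ℝ) ≤ 20)
    (continuousOn_gammaRatio.mono fun ν hν => mem_Ioi.2 (by linarith [hν.1]))
    ⟨gammaRatio_twenty_lt_sqrt_pi_div_eight, sqrt_pi_div_eight_lt_gammaRatio_nineteen⟩
  have hν₀_gt : -1 < ν₀ := by linarith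
  refine ⟨ν₀, by linarith, (sqrt_pi_mul_Gamma_eq_iff_gammaRatio_eq hν₀_gt).2 hν₀,
    fun ν hν heq => ?_, fun ν hν => ?_, h19, h20⟩
  · have hν_gt : -1 < ν := by linarith
    exact strictAntiOn_gammaRatio.injOn hν_gt hν₀_gt
      (((sqrt_pi_mul_Gamma_eq_iff_gammaRatio_eq hν_gt).1 heq).trans hν₀.symm)
  · have hν_gt : -1 < ν := by linarith
    exact (eight_mul_Gamma_le_iff_gammaRatio_le hν_gt).2
      (hν₀ ▸ strictAntiOn_gammaRatio.antitoneOn hν₀_gt hν_gt hν)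
end

section
/- For ν > −1/2 and z in the unit disk, B_ν(z) = (2Γ(ν+1)/(√π Γ(ν+1/2))) · ∫_0^1 (1−t²)^{ν−1/2} e^{zt} dt. -/
open MeasureTheory Set

section RealBeta

lemma ofReal_cpow_mul_one_sub_cpow {x : ℝ} (hx : x ∈ Ioo 0 1) (p q : ℝ) :
    (x : ℂ) ^ ((p : ℂ) - 1) * (1 - (x : ℂ)) ^ ((q : ℂ) - 1) =
      ((x ^ (p - 1) * (1 - x) ^ (q - 1) : ℝ) : ℂ) := by
  rw [Complex.ofReal_mul, Complex.ofReal_cpow hx.1.le, Complex.ofReal_cpow (sub_nonneg.2 hx.2.le)]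
  push_cast
  ring

lemma betaIntegral_ofReal (p q : ℝ) :
    Complex.betaIntegral p q =
      ((∫ x in Ioo (0 : ℝ) 1, x ^ (p - 1) * (1 - x) ^ (q - 1) : ℝ) : ℂ) := by
  rw [Complex.betaIntegral, intervalIntegral.integral_of_le zero_le_one,
    integral_Ioc_eq_integral_Ioo, ← integral_complex_ofReal]
  exact setIntegral_congr_fun measurableSet_Ioo fun x hx ↦ ofReal_cpow_mul_one_sub_cpow hx p q

variable {p q : ℝ}

lemma integrableOn_rpow_mul_one_sub_rpow (hp : 0 < p) (hq : 0 < q) :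
    IntegrableOn (fun x : ℝ ↦ x ^ (p - 1) * (1 - x) ^ (q - 1)) (Ioo 0 1) := by
  have h := Complex.betaIntegral_convergent (u := p) (v := q) (by simpa) (by simpa)
  rw [intervalIntegrable_iff_integrableOn_Ioc_of_le zero_le_one] at h
  refine IntegrableOn.congr_fun (h.mono_set Ioo_subset_Ioc_self).re (fun x hx ↦ ?_)
    measurableSet_Ioo
  rw [ofReal_cpow_mul_one_sub_cpow hx]
  exact Complex.ofReal_re _

lemma integral_rpow_mul_one_sub_rpow (hp : 0 < p) (hq : 0 < q) :
    ∫ x in Ioo (0 : ℝ) 1, x ^ (p - 1) * (1 - x) ^ (q - 1) =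
      Real.Gamma p * Real.Gamma q / Real.Gamma (p + q) := by
  have h := Complex.betaIntegral_eq_Gamma_mul_div p q (by simpa) (by simpa)
  rw [betaIntegral_ofReal, ← Complex.ofReal_add, Complex.Gamma_ofReal, Complex.Gamma_ofReal,
    Complex.Gamma_ofReal] at h
  exact_mod_cast h

end RealBeta

section SquareSubstitution

variable {E : Type*} [NormedAddCommGroup E] [NormedSpace ℝ E]

lemma image_sq_Ioo_zero_one : (fun t : ℝ ↦ t ^ 2) '' Ioo 0 1 = Ioo 0 1 := by
  ext u
  constructor
  · rintro ⟨t, ⟨ht0, ht1⟩, rfl⟩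
    exact ⟨by positivity, by nlinarith⟩
  · rintro ⟨hu0, hu1⟩
    exact ⟨√u, ⟨Real.sqrt_pos.2 hu0, (Real.sqrt_lt' one_pos).2 (by simpa)⟩, Real.sq_sqrt hu0.le⟩

lemma injOn_sq_Ioo_zero_one : InjOn (fun t : ℝ ↦ t ^ 2) (Ioo 0 1) := fun _ hs _ ht h ↦
  (pow_left_strictMonoOn₀ two_ne_zero).injOn hs.1.le ht.1.le h

lemma hasDerivWithinAt_sq_Ioo_zero_one :
    ∀ t ∈ Ioo (0 : ℝ) 1, HasDerivWithinAt (fun t : ℝ ↦ t ^ 2) (2 * t) (Ioo 0 1) t :=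
  fun t _ ↦ by simpa using (hasDerivAt_pow 2 t).hasDerivWithinAt

lemma eqOn_abs_two_mul_smul_comp_sq (g : ℝ → E) :
    EqOn (fun t ↦ |2 * t| • g (t ^ 2)) (fun t ↦ (2 * t) • g (t ^ 2)) (Ioo 0 1) :=
  fun t ht ↦ by simp only [abs_of_pos (mul_pos two_pos ht.1)]

lemma integrableOn_Ioo_zero_one_comp_sq_iff (g : ℝ → E) :
    IntegrableOn (fun t ↦ (2 * t) • g (t ^ 2)) (Ioo 0 1) ↔ IntegrableOn g (Ioo 0 1) := by
  have h := integrableOn_image_iff_integrableOn_abs_deriv_smul measurableSet_Ioo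
    hasDerivWithinAt_sq_Ioo_zero_one injOn_sq_Ioo_zero_one g
  rw [image_sq_Ioo_zero_one] at h
  rw [h]
  exact integrableOn_congr_fun (eqOn_abs_two_mul_smul_comp_sq g).symm measurableSet_Ioo

lemma integral_Ioo_zero_one_comp_sq (g : ℝ → E) :
    ∫ t in Ioo (0 : ℝ) 1, (2 * t) • g (t ^ 2) = ∫ u in Ioo (0 : ℝ) 1, g u := by
  have h := integral_image_eq_integral_abs_deriv_smul measurableSet_Ioo
    hasDerivWithinAt_sq_Ioo_zero_one injOn_sq_Ioo_zero_one g
  rw [image_sq_Ioo_zero_one] at h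
  rw [h]
  exact (setIntegral_congr_fun measurableSet_Ioo (eqOn_abs_two_mul_smul_comp_sq g)).symm

end SquareSubstitution

section Moments

lemma one_sub_sq_rpow_mul_pow_eq {t : ℝ} (ht : 0 < t) (q : ℝ) (n : ℕ) :
    (1 - t ^ 2) ^ (q - 1) * t ^ n =
      2⁻¹ * ((2 * t) • ((t ^ 2) ^ (((n : ℝ) + 1) / 2 - 1) * (1 - t ^ 2) ^ (q - 1))) := by
  have h : (t ^ 2) ^ (((n : ℝ) + 1) / 2 - 1) * t = t ^ n := by
    rw [← Real.rpow_natCast t 2, ← Real.rpow_mul ht.le, ← Real.rpow_add_one ht.ne',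
      ← Real.rpow_natCast]
    congr 1
    push_cast
    ring
  rw [smul_eq_mul, ← h]
  ring

variable {q : ℝ}

lemma integrableOn_one_sub_sq_rpow_mul_pow (hq : 0 < q) (n : ℕ) :
    IntegrableOn (fun t : ℝ ↦ (1 - t ^ 2) ^ (q - 1) * t ^ n) (Ioo 0 1) := by
  have h := (integrableOn_Ioo_zero_one_comp_sq_iff _).2
    (integrableOn_rpow_mul_one_sub_rpow (p := ((n : ℝ) + 1) / 2) (by positivity) hq)
  exact IntegrableOn.congr_fun (h.const_mul 2⁻¹)
    (fun t ht ↦ (one_sub_sq_rpow_mul_pow_eq ht.1 q n).symm) measurableSet_Ioo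

lemma integral_one_sub_sq_rpow_mul_pow (hq : 0 < q) (n : ℕ) :
    ∫ t in Ioo (0 : ℝ) 1, (1 - t ^ 2) ^ (q - 1) * t ^ n =
      Real.Gamma (((n : ℝ) + 1) / 2) * Real.Gamma q /
        (2 * Real.Gamma (((n : ℝ) + 1) / 2 + q)) := by
  have h := integral_Ioo_zero_one_comp_sq
    fun u : ℝ ↦ u ^ (((n : ℝ) + 1) / 2 - 1) * (1 - u) ^ (q - 1)
  rw [setIntegral_congr_fun measurableSet_Ioo (fun t ht ↦ one_sub_sq_rpow_mul_pow_eq ht.1 q n),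
    integral_const_mul, h, integral_rpow_mul_one_sub_rpow (by positivity) hq]
  ring

end Moments

section ExpSeries

open Nat

lemma hasSum_integral_mul_cexp {μ : Measure ℝ} {f : ℝ → ℂ} (hf : Integrable f μ) {R : ℝ}
    (hR : ∀ᵐ t ∂μ, |t| ≤ R) (z : ℂ) :
    HasSum (fun n : ℕ ↦ z ^ n / n ! * ∫ t, f t * (t : ℂ) ^ n ∂μ)
      (∫ t, f t * Complex.exp (z * t) ∂μ) := by
  set F : ℕ → ℝ → ℂ := fun n t ↦ z ^ n / n ! * (f t * (t : ℂ) ^ n)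
  have hpow_le (n : ℕ) : ∀ᵐ t : ℝ ∂μ, ‖(t : ℂ) ^ n‖ ≤ R ^ n := hR.mono fun t ht ↦ by
    rw [norm_pow, Complex.norm_real, Real.norm_eq_abs]
    exact pow_le_pow_left₀ (abs_nonneg t) ht n
  have hF_int (n : ℕ) : Integrable (F n) μ :=
    (hf.mul_bdd (by fun_prop) (hpow_le n)).const_mul _
  have hF_norm (n : ℕ) : ∫ t, ‖F n t‖ ∂μ ≤ (‖z‖ * R) ^ n / n ! * ∫ t, ‖f t‖ ∂μ := by
    rw [← integral_const_mul]
    refine integral_mono_ae (hF_int n).norm (hf.norm.const_mul _) ?_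
    filter_upwards [hpow_le n] with t ht
    calc ‖F n t‖ = ‖z‖ ^ n / n ! * ‖f t‖ * ‖(t : ℂ) ^ n‖ := by
          simp only [F, norm_mul, norm_div, norm_pow, Complex.norm_natCast]
          ring
      _ ≤ ‖z‖ ^ n / n ! * ‖f t‖ * R ^ n := by gcongr
      _ = (‖z‖ * R) ^ n / n ! * ‖f t‖ := by ring
  have hF_sum : Summable fun n ↦ ∫ t, ‖F n t‖ ∂μ :=
    ((Real.summable_pow_div_factorial (‖z‖ * R)).mul_right _).of_nonneg_of_le
      (fun n ↦ integral_nonneg fun t ↦ norm_nonneg _) hF_norm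
  have hF_tsum (t : ℝ) : ∑' n, F n t = f t * Complex.exp (z * t) := by
    rw [← (NormedSpace.expSeries_div_hasSum_exp (z * t)).tsum_eq.trans
      (congr_fun Complex.exp_eq_exp_ℂ _).symm, ← tsum_mul_left]
    exact tsum_congr fun n ↦ by simp only [F]; ring
  simpa only [F, hF_tsum, integral_const_mul] using
    hasSum_integral_of_summable_integral_norm hF_int hF_sum

end ExpSeries

lemma besselStruve_coeff_eq {ν : ℝ} (hν : 0 < ν + 1 / 2) (n : ℕ) :
    Real.Gamma (ν + 1) * Real.Gamma (((n : ℝ) + 1) / 2) /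
        (√Real.pi * n.factorial * Real.Gamma ((n : ℝ) / 2 + ν + 1)) =
      2 * Real.Gamma (ν + 1) / (√Real.pi * Real.Gamma (ν + 1 / 2)) *
        (∫ t in Ioo (0 : ℝ) 1, (1 - t ^ 2) ^ (ν + 1 / 2 - 1) * t ^ n) / n.factorial := by
  have hΓ := (Real.Gamma_pos_of_pos hν).ne'
  rw [integral_one_sub_sq_rpow_mul_pow hν n,
    show ((n : ℝ) + 1) / 2 + (ν + 1 / 2) = n / 2 + ν + 1 by ring]
  generalize Real.Gamma (ν + 1 / 2) = a at hΓ ⊢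
  field_simp

theorem besselStruve_integral_rep_general (ν : ℝ) (hν : -(1/2) < ν) (z : ℂ) :
    besselStruve ν z =
      ((2 * Real.Gamma (ν + 1) / (Real.sqrt Real.pi * Real.Gamma (ν + 1/2)) : ℝ) : ℂ) *
        ∫ t in (0:ℝ)..1, (((1 - t ^ 2) ^ (ν - 1/2) : ℝ) : ℂ) * Complex.exp (z * t) := by
  have hq : 0 < ν + 1 / 2 := by linarith
  have hweight :
      IntegrableOn (fun t : ℝ ↦ (((1 - t ^ 2) ^ (ν + 1 / 2 - 1) : ℝ) : ℂ)) (Ioo 0 1) := by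
    simpa [IntegrableOn] using (integrableOn_one_sub_sq_rpow_mul_pow hq 0).ofReal (𝕜 := ℂ)
  have hbound : ∀ᵐ t ∂volume.restrict (Ioo (0 : ℝ) 1), |t| ≤ 1 :=
    ae_restrict_of_forall_mem measurableSet_Ioo fun t ht ↦ abs_le.2 ⟨by linarith [ht.1], ht.2.le⟩
  rw [show ν - 1 / 2 = ν + 1 / 2 - 1 by ring, intervalIntegral.integral_of_le zero_le_one,
    integral_Ioc_eq_integral_Ioo, ← (hasSum_integral_mul_cexp hweight hbound z).tsum_eq,
    ← tsum_mul_left, besselStruve]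
  refine tsum_congr fun n ↦ ?_
  rw [besselStruve_coeff_eq hq n, Complex.ofReal_div, Complex.ofReal_mul,
    ← integral_complex_ofReal]
  push_cast
  ring

theorem besselStruve_integral_rep (ν : ℝ) (hν : -(1/2) < ν) (z : ℂ) (hz : ‖z‖ < 1) :
    besselStruve ν z =
      ((2 * Real.Gamma (ν + 1) / (Real.sqrt Real.pi * Real.Gamma (ν + 1/2)) : ℝ) : ℂ) *
        ∫ t in (0:ℝ)..1, (((1 - t ^ 2) ^ (ν - 1/2) : ℝ) : ℂ) * Complex.exp (z * t) :=
  besselStruve_integral_rep_general ν hν z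
end

section
/- For all positive integers n ≥ 2, (n+1)(n−2) ≥ 0 implies n a_n − 2(n+1)a_{n+1} + (n+2)a_{n+2} ≥ (n+2)(n² − n − 1)a_{n+2}, given that a_k/a_{k+1} ≥ k+1 for all k ≥ 1 and all a_k > 0. -/
theorem second_difference_abstract (a : ℕ → ℝ)
    (hpos : ∀ k : ℕ, 1 ≤ k → 0 < a k)
    (hratio : ∀ k : ℕ, 1 ≤ k → a k / a (k + 1) ≥ (k : ℝ) + 1) :
    ∀ n : ℕ, 2 ≤ n →
      (n : ℝ) * a n - 2 * ((n : ℝ) + 1) * a (n + 1) + ((n : ℝ) + 2) * a (n + 2) ≥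
        ((n : ℝ) + 2) * ((n : ℝ) ^ 2 - (n : ℝ) - 1) * a (n + 2) := by
  intro n hn
  have h1 : (1 : ℕ) ≤ n := le_trans (by norm_num) hn
  have hp1 := hpos (n + 1) (by omega)
  have hp2 := hpos (n + 2) (by omega)
  have hr1 : a n ≥ ((n : ℝ) + 1) * a (n + 1) := by
    have h := hratio n h1
    calc a n = a n / a (n+1) * a (n+1) := by field_simp
      _ ≥ ((n:ℝ)+1) * a (n+1) := by
          apply mul_le_mul_of_nonneg_right h (le_of_lt hp1)
  have hr2 : a (n + 1) ≥ ((n : ℝ) + 2) * a (n + 2) := by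
    have h := hratio (n + 1) (by omega)
    push_cast at h
    calc a (n+1) = a (n+1) / a (n+2) * a (n+2) := by field_simp
      _ ≥ ((n:ℝ)+2) * a (n+2) := by
          apply mul_le_mul_of_nonneg_right (by linarith) (le_of_lt hp2)
  have hn2 : (2 : ℝ) ≤ (n : ℝ) := by exact_mod_cast hn
  nlinarith [mul_le_mul_of_nonneg_left hr2 (by nlinarith : (0:ℝ) ≤ ((n:ℝ)+1)*((n:ℝ)-2)),
    mul_le_mul_of_nonneg_left hr1 (by positivity : (0:ℝ) ≤ (n:ℝ))]
end
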